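/- arXiv:1611.02431 — 2 statements merged into one kernel-verified Lean document; each statement's English description precedes it below -/
import Mathlib

section
/- Let τ > 0, w > 0, a ≥ 0 and R(x) = (1/(2τ))(x − z)² + (w/τ)|x| + (a/(2τ))·1[x≠0]. If |z| > w, then the minimum of R over nonzero x is attained at x* = z − sgn(z)·w, with value R(x*) = (1/(2τ))·w(2|z| − w) + a/(2τ), and x* is the unique global minimizer of R if and only if (|z| − w)² > a; if (|z| − w)² < a, then 0 is the unique global minimizer. -/
lemma helper5 (τ w a z : ℝ) (hτ : 0 < τ) (hw : 0 < w) (ha : 0 ≤ a)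
    (R : ℝ → ℝ)
    (hR : ∀ x, R x = (1 / (2 * τ)) * (x - z) ^ 2 + (w / τ) * |x|
      + (a / (2 * τ)) * (if x ≠ 0 then 1 else 0))
    (hz : w < z) :
    (∀ x : ℝ, x ≠ 0 → R (z - w) ≤ R x) ∧
    R (z - w) = (1 / (2 * τ)) * (w * (2 * z - w)) + a / (2 * τ) ∧
    ((∀ x : ℝ, x ≠ z - w → R (z - w) < R x) ↔ a < (z - w) ^ 2) ∧
    ((z - w) ^ 2 < a → ∀ x : ℝ, x ≠ 0 → R 0 < R x) := by
  have hzw : 0 < z - w := by linarith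
  have hzw' : z - w ≠ 0 := ne_of_gt hzw
  have hτ2 : (0:ℝ) < 2 * τ := by linarith
  have hτne : τ ≠ 0 := ne_of_gt hτ
  have e1 : (1 / (2 * τ)) * (w * (2 * z - w)) + a / (2 * τ)
      = (w * (2 * z - w) + a) / (2 * τ) := by ring
  have e2 : ∀ x : ℝ, (1 / (2 * τ)) * (x - z) ^ 2 + (w / τ) * |x| + (a / (2 * τ)) * 1
      = ((x - z) ^ 2 + 2 * w * |x| + a) / (2 * τ) := by
    intro x; field_simp
  have e3 : (1 / (2 * τ)) * z ^ 2 = z ^ 2 / (2 * τ) := by ring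
  have hRstar : R (z - w) = (1 / (2 * τ)) * (w * (2 * z - w)) + a / (2 * τ) := by
    rw [hR, if_pos hzw', abs_of_pos hzw]
    field_simp
    ring
  have hR0 : R 0 = (1 / (2 * τ)) * z ^ 2 := by
    rw [hR]; simp
  have key : ∀ x : ℝ, x ≠ 0 → (1 / (2 * τ)) * (w * (2 * z - w)) + a / (2 * τ) ≤ R x := by
    intro x hx
    rw [hR, if_pos hx, e1, e2, div_le_div_iff_of_pos_right hτ2]
    have h1 : x ≤ |x| := le_abs_self x
    have h2 : |x| ^ 2 = x ^ 2 := sq_abs x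
    have h3 : (0:ℝ) ≤ |x| := abs_nonneg x
    nlinarith [sq_nonneg (|x| - z + w), sq_nonneg (|x| - x)]
  have key' : ∀ x : ℝ, x ≠ 0 → x ≠ z - w →
      (1 / (2 * τ)) * (w * (2 * z - w)) + a / (2 * τ) < R x := by
    intro x hx hx'
    rw [hR, if_pos hx, e1, e2, div_lt_div_iff_of_pos_right hτ2]
    have h1 : x ≤ |x| := le_abs_self x
    have h2 : |x| ^ 2 = x ^ 2 := sq_abs x
    have h3 : (0:ℝ) ≤ |x| := abs_nonneg x
    rcases le_or_gt 0 x with h | h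
    · rw [abs_of_nonneg h]
      have hne : x - (z - w) ≠ 0 := sub_ne_zero.2 hx'
      have : (x - (z - w)) ^ 2 > 0 := by positivity
      nlinarith
    · rw [abs_of_neg h]
      nlinarith [mul_pos (neg_pos.2 h) (by linarith : (0:ℝ) < z + w)]
  refine ⟨?_, hRstar, ?_, ?_⟩
  · intro x hx; rw [hRstar]; exact key x hx
  · constructor
    · intro H
      have h0 := H 0 (fun h => hzw' h.symm)
      rw [hRstar, hR0, e1, e3, div_lt_div_iff_of_pos_right hτ2] at h0
      nlinarith [h0]
    · intro ha' x hx
      rw [hRstar]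
      by_cases h0 : x = 0
      · subst h0
        rw [hR0, e1, e3, div_lt_div_iff_of_pos_right hτ2]
        nlinarith
      · exact key' x h0 hx
  · intro ha' x hx
    rw [hR0]
    have hk := key x hx
    have hlt : (1 / (2 * τ)) * z ^ 2
        < (1 / (2 * τ)) * (w * (2 * z - w)) + a / (2 * τ) := by
      rw [e1, e3, div_lt_div_iff_of_pos_right hτ2]
      nlinarith
    linarith

/-- If |z| > w, the minimum of R over nonzero x is at x* = z − sgn(z)w with the stated
value; x* is the unique global minimizer iff (|z|−w)² > a, and if (|z|−w)² < a then 0 is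
the unique global minimizer. -/
theorem stmt_5 (τ w a z : ℝ) (hτ : 0 < τ) (hw : 0 < w) (ha : 0 ≤ a)
    (R : ℝ → ℝ)
    (hR : ∀ x, R x = (1 / (2 * τ)) * (x - z) ^ 2 + (w / τ) * |x|
      + (a / (2 * τ)) * (if x ≠ 0 then 1 else 0))
    (hz : w < |z|) :
    (∀ x : ℝ, x ≠ 0 → R (z - Real.sign z * w) ≤ R x) ∧
    R (z - Real.sign z * w) = (1 / (2 * τ)) * (w * (2 * |z| - w)) + a / (2 * τ) ∧
    ((∀ x : ℝ, x ≠ z - Real.sign z * w → R (z - Real.sign z * w) < R x)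
        ↔ a < (|z| - w) ^ 2) ∧
    ((|z| - w) ^ 2 < a → ∀ x : ℝ, x ≠ 0 → R 0 < R x) := by
  have hz0 : z ≠ 0 := by
    intro h; rw [h, abs_zero] at hz; linarith
  rcases hz0.lt_or_gt with hneg | hpos
  · -- z < 0
    have hsign : Real.sign z = -1 := Real.sign_of_neg hneg
    have habs : |z| = -z := abs_of_neg hneg
    simp only [hsign, habs, neg_mul, one_mul, sub_neg_eq_add]
    have hz' : w < -z := by rwa [habs] at hz
    set R' : ℝ → ℝ := fun y => R (-y) with hR'def
    have hR' : ∀ y, R' y = (1 / (2 * τ)) * (y - (-z)) ^ 2 + (w / τ) * |y|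
        + (a / (2 * τ)) * (if y ≠ 0 then 1 else 0) := by
      intro y
      simp only [hR'def]
      rw [hR, abs_neg]
      have h1 : (-y - z) ^ 2 = (y - -z) ^ 2 := by ring
      rw [h1]
      congr 1
      by_cases hy : y = 0 <;> simp [hy]
    obtain ⟨k1, k2, k3, k4⟩ := helper5 τ w a (-z) hτ hw ha R' hR' hz'
    have hstar : R' (-z - w) = R (z + w) := by
      simp only [hR'def]; congr 1; ring
    refine ⟨?_, ?_, ?_, ?_⟩
    · intro x hx
      have := k1 (-x) (neg_ne_zero.2 hx)
      rw [hstar] at this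
      simpa [hR'def] using this
    · rw [← hstar, k2]
    · rw [← hstar]
      constructor
      · intro H
        refine k3.mp ?_
        intro y hy
        have hy' : -y ≠ z + w := by
          intro h; apply hy; linarith [h]
        have := H (-y) hy'
        rw [hstar] at this ⊢
        simpa [hR'def] using this
      · intro ha' x hx
        have hx' : -x ≠ -z - w := by
          intro h; apply hx; linarith [h]
        have := k3.mpr ha' (-x) hx'
        rw [hstar] at this
        simp only [hR'def, neg_neg] at this
        rwa [hstar]
    · intro ha' x hx
      have := k4 ha' (-x) (neg_ne_zero.2 hx)
      have h0 : R' 0 = R 0 := by simp [hR'def]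
      rw [h0] at this
      simpa [hR'def] using this
  · -- z > 0
    have hsign : Real.sign z = 1 := Real.sign_of_pos hpos
    have habs : |z| = z := abs_of_pos hpos
    simp only [hsign, habs, one_mul]
    exact helper5 τ w a z hτ hw ha R hR (habs ▸ hz)
end

section
/- The mixed soft/hard thresholding operator S_{w,a}(z), defined as 0 if |z| ≤ w or (|z| − w)² ≤ a, and z − sgn(z)·w otherwise (w > 0, a ≥ 0), returns a global minimizer of the functional R(x) = (1/(2τ))(x − z)² + (w/τ)|x| + (a/(2τ))·1[x≠0] for every z in R. -/
/-- The mixed soft/hard thresholding operator returns a global minimizer of the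
surrogate functional R. -/
theorem stmt_6 (τ w a : ℝ) (hτ : 0 < τ) (hw : 0 < w) (ha : 0 ≤ a)
    (S : ℝ → ℝ)
    (hS : ∀ z, S z = if |z| ≤ w ∨ (|z| - w) ^ 2 ≤ a then 0 else z - Real.sign z * w)
    (R : ℝ → ℝ → ℝ)
    (hR : ∀ z x, R z x = (1 / (2 * τ)) * (x - z) ^ 2 + (w / τ) * |x|
      + (a / (2 * τ)) * (if x ≠ 0 then 1 else 0)) :
    ∀ z x : ℝ, R z (S z) ≤ R z x := by
  intro z x
  set F : ℝ → ℝ := fun t => (t - z) ^ 2 + 2 * w * |t| + a * (if t ≠ 0 then 1 else 0)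
    with hF
  have hRF : ∀ t, R z t = (1 / (2 * τ)) * F t := by
    intro t
    rw [hR, hF]
    by_cases ht : t = 0 <;> simp [ht] <;> field_simp <;> ring
  rw [hRF, hRF]
  have hpos : 0 < 1 / (2 * τ) := by positivity
  apply mul_le_mul_of_nonneg_left _ hpos.le
  have hxz : x * z ≤ |x| * |z| := by
    calc x * z ≤ |x * z| := le_abs_self _
    _ = |x| * |z| := abs_mul x z
  have hx2 : |x| ^ 2 = x ^ 2 := sq_abs x
  have hz2 : |z| ^ 2 = z ^ 2 := sq_abs z
  have hxnn : 0 ≤ |x| := abs_nonneg x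
  have hF0 : F 0 = z ^ 2 := by simp [hF]
  by_cases hc : |z| ≤ w ∨ (|z| - w) ^ 2 ≤ a
  · have hSz : S z = 0 := by rw [hS]; simp [hc]
    rw [hSz, hF0]
    by_cases hx : x = 0
    · rw [hx, hF0]
    · have hFx : F x = (x - z) ^ 2 + 2 * w * |x| + a := by simp [hF, hx]
      rw [hFx]
      rcases hc with hc | hc
      · nlinarith [sq_nonneg (|x| - |z| + w), sq_nonneg (|x|)]
      · nlinarith [sq_nonneg (|x| - |z| + w)]
  · push_neg at hc
    obtain ⟨hzw, haz⟩ := hc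
    have hz0 : z ≠ 0 := by
      intro h; rw [h] at hzw; simp at hzw; linarith
    have hSz : S z = z - Real.sign z * w := by
      rw [hS]; rw [if_neg]; push_neg; exact ⟨hzw, haz⟩
    rcases lt_or_gt_of_ne hz0 with hzneg | hzpos
    · have hsign : Real.sign z = -1 := Real.sign_of_neg hzneg
      have habsz : |z| = -z := abs_of_neg hzneg
      rw [habsz] at hzw haz hxz
      have hSzv : S z = z + w := by rw [hSz, hsign]; ring
      have hSne : z + w ≠ 0 := by intro h; nlinarith
      have habsS : |z + w| = -(z + w) := abs_of_neg (by linarith)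
      have hFS : F (z + w) = w ^ 2 + 2 * w * (-(z + w)) + a := by
        simp [hF, hSne, habsS]
      rw [hSzv, hFS]
      by_cases hx : x = 0
      · rw [hx, hF0]; nlinarith
      · have hFx : F x = (x - z) ^ 2 + 2 * w * |x| + a := by simp [hF, hx]
        rw [hFx]
        have key : (x - z) ^ 2 + 2 * w * |x| - (w ^ 2 + 2 * w * (-(z + w)))
            = (|x| + z + w) ^ 2 + 2 * (|x| * (-z) - x * z) := by linear_combination -hx2
        linarith [sq_nonneg (|x| + z + w), hxz, key]
    · have hsign : Real.sign z = 1 := Real.sign_of_pos hzpos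
      have habsz : |z| = z := abs_of_pos hzpos
      rw [habsz] at hzw haz hxz
      have hSzv : S z = z - w := by rw [hSz, hsign]; ring
      have hSne : z - w ≠ 0 := by intro h; nlinarith
      have habsS : |z - w| = z - w := abs_of_pos (by linarith)
      have hFS : F (z - w) = w ^ 2 + 2 * w * (z - w) + a := by
        simp [hF, hSne, habsS]
      rw [hSzv, hFS]
      by_cases hx : x = 0
      · rw [hx, hF0]; nlinarith
      · have hFx : F x = (x - z) ^ 2 + 2 * w * |x| + a := by simp [hF, hx]
        rw [hFx]
        have key : (x - z) ^ 2 + 2 * w * |x| - (w ^ 2 + 2 * w * (z - w))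
            = (|x| - z + w) ^ 2 + 2 * (|x| * z - x * z) := by linear_combination -hx2
        linarith [sq_nonneg (|x| - z + w), hxz, key]
end
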